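/- arXiv:2309.07962 — 3 statements merged into one kernel-verified Lean document; each statement's English description precedes it below -/
import Mathlib

section
/- Let K be a commutative ring and let n ≥ 2. Then for every k > n the weight-k component U(K^n)_k is the zero submodule; equivalently, every product of more than n elements of V vanishes in U(K^n). -/
/-!
Universal enveloping algebra of the abelian alternative algebra `K^n`.

`T = Tens_K(K^n ⊕ K^n)`; `l_a` (resp. `r_a`) is the image of `(a,0)` (resp. `(0,a)`).
`U(K^n)` is the quotient of `T` by the two-sided ideal generated by
`l_a·l_a`, `r_a·r_a`, `l_b·l_a + r_a·r_b`, `r_b·l_a − l_a·r_b − r_a·r_b`.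
-/

noncomputable section

/-- `l_a ∈ Tens_K(K^n ⊕ K^n)`. -/
def lT (K : Type) [CommRing K] (n : ℕ) (a : Fin n → K) :
    TensorAlgebra K ((Fin n → K) × (Fin n → K)) :=
  TensorAlgebra.ι K (a, 0)

/-- `r_a ∈ Tens_K(K^n ⊕ K^n)`. -/
def rT (K : Type) [CommRing K] (n : ℕ) (a : Fin n → K) :
    TensorAlgebra K ((Fin n → K) × (Fin n → K)) :=
  TensorAlgebra.ι K (0, a)

/-- The relations defining `U(K^n)`: quotienting by this relation is the same as
quotienting by the two-sided ideal generated by the listed elements. -/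
inductive URel (K : Type) [CommRing K] (n : ℕ) :
    TensorAlgebra K ((Fin n → K) × (Fin n → K)) →
    TensorAlgebra K ((Fin n → K) × (Fin n → K)) → Prop
  | ll (a : Fin n → K) : URel K n (lT K n a * lT K n a) 0
  | rr (a : Fin n → K) : URel K n (rT K n a * rT K n a) 0
  | llrr (a b : Fin n → K) : URel K n (lT K n b * lT K n a + rT K n a * rT K n b) 0
  | rl (a b : Fin n → K) :
      URel K n (rT K n b * lT K n a - lT K n a * rT K n b - rT K n a * rT K n b) 0

/-- The universal enveloping algebra `U(K^n)`. -/
def Ualg (K : Type) [CommRing K] (n : ℕ) : Type := RingQuot (URel K n)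

instance (K : Type) [CommRing K] (n : ℕ) : Ring (Ualg K n) :=
  inferInstanceAs (Ring (RingQuot (URel K n)))

instance (K : Type) [CommRing K] (n : ℕ) : Algebra K (Ualg K n) :=
  inferInstanceAs (Algebra K (RingQuot (URel K n)))

/-- Image of `l_a` in `U(K^n)`. -/
def lU (K : Type) [CommRing K] (n : ℕ) (a : Fin n → K) : Ualg K n :=
  RingQuot.mkAlgHom K (URel K n) (lT K n a)

/-- Image of `r_a` in `U(K^n)`. -/
def rU (K : Type) [CommRing K] (n : ℕ) (a : Fin n → K) : Ualg K n :=
  RingQuot.mkAlgHom K (URel K n) (rT K n a)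

/-- The weight-one part `V ⊆ U(K^n)`: the span of all `l_a` and `r_a`. -/
def V (K : Type) [CommRing K] (n : ℕ) : Submodule K (Ualg K n) :=
  Submodule.span K (Set.range (lU K n) ∪ Set.range (rU K n))


/-!
The relations `r_b l_a = l_a r_b + r_a r_b` and `l_b l_a = -r_a r_b` move every `l` to the front
and turn two `l`'s into two `r`'s, so `V^(k+1) ⊆ R^(k+1) + L R^k`, where `L`, `R` are the spans
of the `l_a`, `r_a`. The `r_a` square to zero, hence anticommute, so a product of `r`'s of basis
vectors with a repeated index vanishes; by pigeonhole `R^k = 0` for `k > n`. Expanding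
`l_c l_a l_a = 0` gives `l_a r_a r_c = 0`, and by polarization `l_b r_a r_c = -l_a r_b r_c`; so
`l_{e_j} r_{e_{i₁}} ⋯ r_{e_{i_k}}` with `k ≥ 2` vanishes unless `j, i₁, …, i_k` are distinct,
which is impossible for `k ≥ n`.
-/

theorem LinearMap.range_eq_span_single {R ι M : Type*} [Semiring R] [Fintype ι] [DecidableEq ι]
    [AddCommMonoid M] [Module R M] (f : (ι → R) →ₗ[R] M) :
    LinearMap.range f = Submodule.span R (Set.range fun i => f (Pi.single i 1)) := by
  rw [LinearMap.range_eq_map, ← (Pi.basisFun R ι).span_eq, Submodule.map_span, ← Set.range_comp]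
  simp only [Function.comp_def, Pi.basisFun_apply]

namespace Ualg

open Submodule

variable {K : Type} [CommRing K] {n : ℕ}

variable (K n) in
def lULin : (Fin n → K) →ₗ[K] Ualg K n :=
  (RingQuot.mkAlgHom K (URel K n)).toLinearMap ∘ₗ TensorAlgebra.ι K ∘ₗ LinearMap.inl K _ _

variable (K n) in
def rULin : (Fin n → K) →ₗ[K] Ualg K n :=
  (RingQuot.mkAlgHom K (URel K n)).toLinearMap ∘ₗ TensorAlgebra.ι K ∘ₗ LinearMap.inr K _ _

@[simp] theorem lULin_apply (a : Fin n → K) : lULin K n a = lU K n a := rfl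

@[simp] theorem rULin_apply (a : Fin n → K) : rULin K n a = rU K n a := rfl

theorem lU_mul_lU (a b : Fin n → K) : lU K n b * lU K n a = -(rU K n a * rU K n b) := by
  have h := RingQuot.mkAlgHom_rel K (URel.llrr a b)
  rw [map_add, map_mul, map_mul, map_zero] at h
  exact eq_neg_of_add_eq_zero_left h

theorem rU_mul_lU (a b : Fin n → K) :
    rU K n b * lU K n a = lU K n a * rU K n b + rU K n a * rU K n b := by
  have h := RingQuot.mkAlgHom_rel K (URel.rl a b)
  rw [map_sub, map_sub, map_mul, map_mul, map_mul, map_zero, sub_sub, sub_eq_zero] at h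
  exact h

theorem lU_mul_self (a : Fin n → K) : lU K n a * lU K n a = 0 := by
  have h := RingQuot.mkAlgHom_rel K (URel.ll a)
  rw [map_mul, map_zero] at h
  exact h

theorem rU_mul_self (a : Fin n → K) : rU K n a * rU K n a = 0 := by
  have h := RingQuot.mkAlgHom_rel K (URel.rr a)
  rw [map_mul, map_zero] at h
  exact h

theorem rU_mul_rU_comm (a b : Fin n → K) : rU K n b * rU K n a = -(rU K n a * rU K n b) := by
  have h := rU_mul_self (a + b)
  rw [← rULin_apply, map_add, rULin_apply, rULin_apply, add_mul, mul_add, mul_add,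
    rU_mul_self, rU_mul_self, zero_add, add_zero] at h
  exact eq_neg_of_add_eq_zero_right h

theorem lU_mul_rU_self_mul (a c : Fin n → K) : lU K n a * (rU K n a * rU K n c) = 0 := by
  have h : lU K n c * lU K n a * lU K n a = -(lU K n a * (rU K n a * rU K n c)) := by
    rw [lU_mul_lU a c, neg_mul, mul_assoc, rU_mul_lU a c, mul_add, ← mul_assoc, ← mul_assoc,
      rU_mul_lU a a, rU_mul_self, add_zero, zero_mul, add_zero, mul_assoc]
  rwa [mul_assoc, lU_mul_self, mul_zero, eq_comm, neg_eq_zero] at h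

theorem lU_mul_rU_mul_rU_comm (a b c : Fin n → K) :
    lU K n b * (rU K n a * rU K n c) = -(lU K n a * (rU K n b * rU K n c)) := by
  have h := lU_mul_rU_self_mul (a + b) c
  rw [← lULin_apply, ← rULin_apply, map_add, map_add, lULin_apply, lULin_apply, rULin_apply,
    rULin_apply, add_mul, add_mul, mul_add, mul_add, lU_mul_rU_self_mul, lU_mul_rU_self_mul,
    zero_add, add_zero] at h
  exact eq_neg_of_add_eq_zero_right h

variable (K n) in
def rProd (s : List (Fin n → K)) : Ualg K n := (s.map (rU K n)).prod

@[simp] theorem rProd_cons (a : Fin n → K) (s : List (Fin n → K)) :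
    rProd K n (a :: s) = rU K n a * rProd K n s :=
  List.prod_cons

theorem rU_mul_rProd_of_mem {a : Fin n → K} {s : List (Fin n → K)} (h : a ∈ s) :
    rU K n a * rProd K n s = 0 := by
  induction s with
  | nil => simp at h
  | cons b s ih =>
    rw [rProd_cons, ← mul_assoc]
    obtain rfl | h := List.mem_cons.mp h
    · rw [rU_mul_self, zero_mul]
    · rw [rU_mul_rU_comm, neg_mul, mul_assoc, ih h, mul_zero, neg_zero]

theorem rProd_eq_zero_of_not_nodup {s : List (Fin n → K)} (h : ¬s.Nodup) : rProd K n s = 0 := by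
  induction s with
  | nil => exact absurd List.nodup_nil h
  | cons a s ih =>
    rw [rProd_cons]
    by_cases ha : a ∈ s
    · exact rU_mul_rProd_of_mem ha
    · rw [ih fun hs => h (List.nodup_cons.mpr ⟨ha, hs⟩), mul_zero]

theorem lU_mul_rProd_of_mem {a : Fin n → K} {s : List (Fin n → K)} (ha : a ∈ s)
    (hs : 2 ≤ s.length) : lU K n a * rProd K n s = 0 := by
  match s, ha, hs with
  | b :: c :: t, ha, _ =>
    simp only [rProd_cons, ← mul_assoc]
    obtain rfl | ha := List.mem_cons.mp ha
    · rw [mul_assoc (lU K n a), lU_mul_rU_self_mul, zero_mul]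
    · rw [mul_assoc (lU K n a), lU_mul_rU_mul_rU_comm, neg_mul, mul_assoc, mul_assoc, ← rProd_cons,
        rU_mul_rProd_of_mem ha, mul_zero, neg_zero]

variable (K n) in
def lSpan : Submodule K (Ualg K n) := LinearMap.range (lULin K n)

variable (K n) in
def rSpan : Submodule K (Ualg K n) := LinearMap.range (rULin K n)

theorem V_eq_lSpan_sup_rSpan : V K n = lSpan K n ⊔ rSpan K n := by
  rw [V, span_union]
  exact congrArg₂ (· ⊔ ·) (lSpan K n).span_eq (rSpan K n).span_eq

theorem lSpan_mul_lSpan_le : lSpan K n * lSpan K n ≤ rSpan K n * rSpan K n := by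
  rw [mul_le]
  rintro _ ⟨a, rfl⟩ _ ⟨b, rfl⟩
  rw [lULin_apply, lULin_apply, lU_mul_lU]
  exact neg_mem (mul_mem_mul ⟨b, rfl⟩ ⟨a, rfl⟩)

theorem rSpan_mul_lSpan_le :
    rSpan K n * lSpan K n ≤ lSpan K n * rSpan K n ⊔ rSpan K n * rSpan K n := by
  rw [mul_le]
  rintro _ ⟨a, rfl⟩ _ ⟨b, rfl⟩
  rw [rULin_apply, lULin_apply, rU_mul_lU]
  exact add_mem_sup (mul_mem_mul ⟨b, rfl⟩ ⟨a, rfl⟩) (mul_mem_mul ⟨b, rfl⟩ ⟨a, rfl⟩)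

theorem V_pow_succ_le (k : ℕ) :
    V K n ^ (k + 1) ≤ rSpan K n ^ (k + 1) ⊔ lSpan K n * rSpan K n ^ k := by
  induction k with
  | zero => rw [zero_add, pow_one, pow_one, pow_zero, mul_one, V_eq_lSpan_sup_rSpan, sup_comm]
  | succ k ih =>
    set L := lSpan K n
    set R := rSpan K n
    have hLL : L * L * R ^ k ≤ R ^ (k + 2) := by
      calc L * L * R ^ k ≤ R * R * R ^ k := mul_le_mul_left lSpan_mul_lSpan_le _
        _ = R ^ (k + 2) := by rw [mul_assoc, ← pow_succ', ← pow_succ']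
    have hRL : R * L * R ^ k ≤ R ^ (k + 2) ⊔ L * R ^ (k + 1) := by
      calc R * L * R ^ k ≤ (L * R ⊔ R * R) * R ^ k := mul_le_mul_left rSpan_mul_lSpan_le _
        _ = R ^ (k + 2) ⊔ L * R ^ (k + 1) := by
          rw [Submodule.sup_mul, mul_assoc, mul_assoc, ← pow_succ', ← pow_succ', sup_comm]
    calc V K n ^ (k + 2) = V K n * V K n ^ (k + 1) := pow_succ' _ _
      _ ≤ (L ⊔ R) * (R ^ (k + 1) ⊔ L * R ^ k) := mul_le_mul' V_eq_lSpan_sup_rSpan.le ih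
      _ = L * R ^ (k + 1) ⊔ L * L * R ^ k ⊔ (R ^ (k + 2) ⊔ R * L * R ^ k) := by
        rw [Submodule.sup_mul, Submodule.mul_sup, Submodule.mul_sup, ← mul_assoc, ← mul_assoc,
          ← pow_succ']
      _ ≤ R ^ (k + 2) ⊔ L * R ^ (k + 1) :=
        sup_le (sup_le le_sup_right (hLL.trans le_sup_left)) (sup_le le_sup_left hRL)

theorem rSpan_eq_span_single : rSpan K n = span K (Set.range fun i => rU K n (Pi.single i 1)) :=
  LinearMap.range_eq_span_single _

theorem lSpan_eq_span_single : lSpan K n = span K (Set.range fun i => lU K n (Pi.single i 1)) :=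
  LinearMap.range_eq_span_single _

theorem rSpan_pow_le_span (k : ℕ) : rSpan K n ^ k ≤ span K
    {x | ∃ t : List (Fin n), t.length = k ∧ rProd K n (t.map (Pi.single · 1)) = x} := by
  induction k with
  | zero =>
    rw [pow_zero, one_eq_span]
    exact span_mono (by rintro _ rfl; exact ⟨[], rfl, rfl⟩)
  | succ k ih =>
    rw [pow_succ']
    refine (mul_le_mul' rSpan_eq_span_single.le ih).trans ?_
    rw [span_mul_span]
    refine span_mono ?_
    rintro _ ⟨_, ⟨i, rfl⟩, _, ⟨t, rfl, rfl⟩, rfl⟩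
    exact ⟨i :: t, rfl, rProd_cons _ _⟩

theorem lSpan_mul_rSpan_pow_le_span (k : ℕ) : lSpan K n * rSpan K n ^ k ≤ span K
    {x | ∃ (j : Fin n) (t : List (Fin n)), t.length = k ∧
      lU K n (Pi.single j 1) * rProd K n (t.map (Pi.single · 1)) = x} := by
  refine (mul_le_mul' lSpan_eq_span_single.le (rSpan_pow_le_span k)).trans ?_
  rw [span_mul_span]
  refine span_mono ?_
  rintro _ ⟨_, ⟨j, rfl⟩, _, ⟨t, rfl, rfl⟩, rfl⟩
  exact ⟨j, t, rfl, rfl⟩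

theorem rSpan_pow_eq_bot {k : ℕ} (hk : n < k) : rSpan K n ^ k = ⊥ := by
  refine le_bot_iff.mp ((rSpan_pow_le_span k).trans (span_eq_bot.mpr ?_).le)
  rintro _ ⟨t, rfl, rfl⟩
  refine rProd_eq_zero_of_not_nodup fun ht => ?_
  have := (ht.of_map _).length_le_card
  rw [Fintype.card_fin] at this
  omega

theorem lSpan_mul_rSpan_pow_eq_bot (hn : 2 ≤ n) {k : ℕ} (hk : n ≤ k) :
    lSpan K n * rSpan K n ^ k = ⊥ := by
  refine le_bot_iff.mp ((lSpan_mul_rSpan_pow_le_span k).trans (span_eq_bot.mpr ?_).le)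
  rintro _ ⟨j, t, rfl, rfl⟩
  by_cases ht : (t.map (Pi.single · (1 : K))).Nodup
  · have hj : j ∈ t := by
      by_contra hj
      have := (List.nodup_cons.mpr ⟨hj, ht.of_map _⟩).length_le_card
      rw [List.length_cons, Fintype.card_fin] at this
      omega
    exact lU_mul_rProd_of_mem (List.mem_map_of_mem hj) (by rw [List.length_map]; omega)
  · rw [rProd_eq_zero_of_not_nodup ht, mul_zero]

end Ualg

/-- For `K` a commutative ring and `n ≥ 2`, the weight-`k` component of `U(K^n)` vanishes
for all `k > n`: every product of more than `n` elements of `V` is zero in `U(K^n)`. -/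
theorem weight_component_eq_bot (K : Type) [CommRing K] (n : ℕ) (hn : 2 ≤ n)
    (k : ℕ) (hk : n < k) :
    V K n ^ k = (⊥ : Submodule K (Ualg K n)) := by
  obtain ⟨m, rfl⟩ := Nat.exists_eq_add_one_of_ne_zero (by omega : k ≠ 0)
  refine le_bot_iff.mp ((Ualg.V_pow_succ_le m).trans ?_)
  rw [Ualg.rSpan_pow_eq_bot hk, Ualg.lSpan_mul_rSpan_pow_eq_bot hn (by omega), bot_sup_eq]

end
end

section
/- There exists a nonunital, nonassociative algebra E over ℚ (a ℚ-module with a ℚ-bilinear multiplication) such that: (i) E satisfies the alternative laws (xx)y = x(xy) and (xy)y = x(yy) for all x, y ∈ E; (ii) (uv)(xy) = 0 for all u, v, x, y ∈ E; and yet (iii) for every n ≥ 1 there exist elements x_1, …, x_n ∈ E whose left-normed product ((x_1 x_2) x_3 ⋯) x_n is nonzero. In particular there is an alternative algebra of solvability index 2 that is not nilpotent. -/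
/-!
Take `E = V × (Λ × Λ)` with `Λ` the exterior algebra of `V = ℚ^(ℕ)` and
`(a, u) * (b, v) = (0, R b (R a e) + R a (T v) + R b u)`, where `R a` is right multiplication by
`ι a` on both factors and `e = (1, 0)`. Every product lies in `0 × (Λ × Λ)`, on which the
multiplication vanishes, while the left-normed product of the generators is
`(0, (e₀ ∧ ⋯ ∧ eₙ, 0)) ≠ 0`. Both alternative laws reduce to `R a ∘ R a = 0`, `T² + T + 1 = 0` and
`T ∘ R a = R a ∘ T²`. Reading `Λ × Λ` as `Λ ⊗ ℚ(ω)` for a primitive cube root of unity `ω`, take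
for `T` multiplication by `ω` on even and by `ω²` on odd elements; this is `T = (K - 1) / 2` for
`K = √-3 ∘ (grade involution)`, where `√-3` acts by `(p, q) ↦ (-3 q, p)`.
-/

structure QAlgebra where
  carrier : Type
  [addCommGroup : AddCommGroup carrier]
  [module : Module ℚ carrier]
  mul : carrier →ₗ[ℚ] carrier →ₗ[ℚ] carrier

attribute [instance] QAlgebra.addCommGroup QAlgebra.module

open ExteriorAlgebra CliffordAlgebra

noncomputable section

section TwistedMul

variable {k V W : Type*} [CommRing k] [AddCommGroup V] [Module k V] [AddCommGroup W]
  [Module k W] (R : V →ₗ[k] Module.End k W) (T : Module.End k W) (e : W)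

def twistedMul : V × W →ₗ[k] V × W →ₗ[k] V × W :=
  LinearMap.mk₂ k (fun x y => (0, R y.1 (R x.1 e) + R x.1 (T y.2) + R y.1 x.2))
    (fun x x' y => by ext <;> simp; abel)
    (fun c x y => by ext <;> simp [smul_add])
    (fun x y y' => by ext <;> simp; abel)
    (fun c x y => by ext <;> simp [smul_add])

@[simp]
lemma twistedMul_apply (x y : V × W) :
    twistedMul R T e x y = (0, R y.1 (R x.1 e) + R x.1 (T y.2) + R y.1 x.2) := rfl

lemma twistedMul_twistedMul_eq_zero (u v x y : V × W) :
    twistedMul R T e (twistedMul R T e u v) (twistedMul R T e x y) = 0 := by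
  simp

variable {R T}

lemma apply_apply_anticomm (hR : ∀ a w, R a (R a w) = 0) (a b : V) (w : W) :
    R a (R b w) = -R b (R a w) := by
  have h := hR (a + b) w
  simp only [map_add, LinearMap.add_apply, hR, zero_add, add_zero] at h
  exact eq_neg_of_add_eq_zero_left (by rwa [add_comm] at h)

lemma twistedMul_left_alternative (hR : ∀ a w, R a (R a w) = 0)
    (hT : ∀ w, T (T w) = -T w - w) (hTR : ∀ a w, T (R a w) = R a (T (T w))) (x y : V × W) :
    twistedMul R T e (twistedMul R T e x x) y = twistedMul R T e x (twistedMul R T e x y) := by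
  obtain ⟨a, u⟩ := x
  obtain ⟨b, v⟩ := y
  simp only [twistedMul_apply, map_zero, LinearMap.zero_apply, add_zero, zero_add, map_add, hR,
    hTR, apply_apply_anticomm hR a b, map_neg, neg_zero, hT, map_sub, Prod.mk.injEq, true_and]
  module

lemma twistedMul_right_alternative (hR : ∀ a w, R a (R a w) = 0)
    (hT : ∀ w, T (T w) = -T w - w) (hTR : ∀ a w, T (R a w) = R a (T (T w))) (x y : V × W) :
    twistedMul R T e (twistedMul R T e x y) y = twistedMul R T e x (twistedMul R T e y y) := by
  obtain ⟨a, u⟩ := x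
  obtain ⟨b, v⟩ := y
  simp only [twistedMul_apply, map_zero, LinearMap.zero_apply, add_zero, zero_add, map_add, hR,
    hTR, apply_apply_anticomm hR a b, map_neg, hT, map_sub, Prod.mk.injEq, true_and]
  module

end TwistedMul

section CubeRoot

variable {W : Type*} [AddCommGroup W] [Module ℚ W] {K : Module.End ℚ W}

variable (K) in
def cubeRootOfUnity : Module.End ℚ W := (2⁻¹ : ℚ) • (K - 1)

lemma cubeRootOfUnity_cubeRootOfUnity (hK : ∀ w, K (K w) = (-3 : ℚ) • w) (w : W) :
    cubeRootOfUnity K (cubeRootOfUnity K w) = -cubeRootOfUnity K w - w := by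
  simp only [cubeRootOfUnity, LinearMap.smul_apply, LinearMap.sub_apply, Module.End.one_apply,
    map_smul, map_sub, hK]
  module

lemma cubeRootOfUnity_apply_of_anticommute {S : Module.End ℚ W} (hK : ∀ w, K (K w) = (-3 : ℚ) • w)
    (hKS : ∀ w, K (S w) = -S (K w)) (w : W) :
    cubeRootOfUnity K (S w) = S (cubeRootOfUnity K (cubeRootOfUnity K w)) := by
  rw [cubeRootOfUnity_cubeRootOfUnity hK]
  simp only [cubeRootOfUnity, LinearMap.smul_apply, LinearMap.sub_apply, Module.End.one_apply,
    map_smul, map_sub, map_neg, hKS]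
  module

end CubeRoot

lemma ExteriorAlgebra.ιMulti_single_ne_zero {R : Type*} [CommRing R] [Nontrivial R] (n : ℕ) :
    ιMulti R n (fun i : Fin n => Finsupp.single (i : ℕ) (1 : R)) ≠ 0 := by
  intro h
  have hpair := exteriorPower.pairingDual_apply_apply_eq_one (R := R)
    (fun i : ℕ => Finsupp.single i 1) (fun i => Finsupp.lapply i) (by simp)
    (fun i j hij => by simp [hij.symm]) n (Fin.valOrderEmb n)
  have h0 : exteriorPower.ιMulti R n
      ((fun i : ℕ => Finsupp.single i (1 : R)) ∘ Fin.valOrderEmb n) = 0 := Subtype.ext h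
  rw [h0, map_zero] at hpair
  exact zero_ne_one hpair

section Grassmann

variable (V : Type) [AddCommGroup V] [Module ℚ V]

local notation "Λ" => ExteriorAlgebra ℚ V

def rightMulι : V →ₗ[ℚ] Module.End ℚ (Λ × Λ) where
  toFun a := (LinearMap.mulRight ℚ (ι ℚ a)).prodMap (LinearMap.mulRight ℚ (ι ℚ a))
  map_add' a b := by ext <;> simp [mul_add]
  map_smul' c a := by ext <;> simp

def sqrtNegThree : Module.End ℚ (Λ × Λ) :=
  ((-3 : ℚ) • involute.toLinearMap.comp (LinearMap.snd ℚ Λ Λ)).prod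
    (involute.toLinearMap.comp (LinearMap.fst ℚ Λ Λ))

abbrev grassmannTwisted : QAlgebra where
  carrier := V × (Λ × Λ)
  mul := twistedMul (rightMulι V) (cubeRootOfUnity (sqrtNegThree V)) (1, 0)

variable {V}

@[simp]
lemma rightMulι_apply (a : V) (w : Λ × Λ) : rightMulι V a w = (w.1 * ι ℚ a, w.2 * ι ℚ a) := rfl

@[simp]
lemma sqrtNegThree_apply (w : Λ × Λ) :
    sqrtNegThree V w = ((-3 : ℚ) • involute w.2, involute w.1) := rfl

lemma rightMulι_rightMulι_self (a : V) (w : Λ × Λ) : rightMulι V a (rightMulι V a w) = 0 := by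
  simp [mul_assoc]

lemma sqrtNegThree_sqrtNegThree (w : Λ × Λ) : sqrtNegThree V (sqrtNegThree V w) = (-3 : ℚ) • w := by
  ext <;> simp

lemma sqrtNegThree_rightMulι (a : V) (w : Λ × Λ) :
    sqrtNegThree V (rightMulι V a w) = -rightMulι V a (sqrtNegThree V w) := by
  simp

lemma grassmannTwisted_leftNormed_eq_ιMulti (v : ℕ → V) (m : ℕ) :
    ((List.range (m + 1)).map fun i => ((v (i + 1), 0) : V × (Λ × Λ))).foldl
        (fun x y => (grassmannTwisted V).mul x y) (v 0, 0) =
      (0, (ιMulti ℚ (m + 2) fun i => v i, 0)) := by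
  induction m with
  | zero => simp [ιMulti_apply, Matrix.vecTail]
  | succ m ih =>
    rw [List.range_succ, List.map_append, List.foldl_append, ih, ιMulti_apply (n := m + 3),
      List.ofFn_succ', List.prod_concat, ← ιMulti_apply]
    simp

end Grassmann

end

/-- There is an alternative algebra over `ℚ` of solvability index 2 that is not
nilpotent: it satisfies the alternative laws, all products of two products vanish,
yet for every `n ≥ 1` some left-normed product of `n` elements is nonzero. -/
theorem exists_solvable_not_nilpotent_alternative_algebra :
    ∃ E : QAlgebra,
      (∀ x y : E.carrier, E.mul (E.mul x x) y = E.mul x (E.mul x y)) ∧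
      (∀ x y : E.carrier, E.mul (E.mul x y) y = E.mul x (E.mul y y)) ∧
      (∀ u v x y : E.carrier, E.mul (E.mul u v) (E.mul x y) = 0) ∧
      (∀ n : ℕ, 1 ≤ n → ∃ x : ℕ → E.carrier,
        List.foldl (fun a b => E.mul a b) (x 0)
          ((List.range (n - 1)).map fun i => x (i + 1)) ≠ 0) := by
  have hK := sqrtNegThree_sqrtNegThree (V := ℕ →₀ ℚ)
  have hT := cubeRootOfUnity_cubeRootOfUnity hK
  have hTR (a) := cubeRootOfUnity_apply_of_anticommute hK (sqrtNegThree_rightMulι a)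
  refine ⟨grassmannTwisted (ℕ →₀ ℚ),
    twistedMul_left_alternative _ rightMulι_rightMulι_self hT hTR,
    twistedMul_right_alternative _ rightMulι_rightMulι_self hT hTR,
    twistedMul_twistedMul_eq_zero _ _ _, fun n hn => ⟨fun i => (Finsupp.single i 1, 0), ?_⟩⟩
  rcases n with _ | _ | m
  · omega
  · simp
  · intro h
    have h' :=
      (grassmannTwisted_leftNormed_eq_ιMulti (fun i => Finsupp.single i (1 : ℚ)) m).symm.trans h
    exact ιMulti_single_ne_zero (m + 2) (congrArg (fun z => z.2.1) h')
end

section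
/- Let M = {a, b, c} be the magma with multiplication table aa = a, ab = a, ac = c, ba = a, bb = b, bc = b, ca = c, cb = b, cc = c. Then: (i) M is a commutative magma satisfying the alternative laws (xx)y = x(xy) and (xy)y = x(yy) for all x, y ∈ M; but (ii) for any nontrivial commutative ring K, the magma algebra KM (the free K-module on M with product extended K-bilinearly from the product of M) is not alternative: specifically, ((a+b)(a+b))·c ≠ (a+b)·((a+b)c) in KM. -/
/-- The three-element magma `{a, b, c}` with multiplication table
`aa = a, ab = a, ac = c, ba = a, bb = b, bc = b, ca = c, cb = b, cc = c`. -/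
inductive M3 : Type
  | a : M3
  | b : M3
  | c : M3

instance : Mul M3 :=
  ⟨fun x y =>
    match x, y with
    | .a, .a => .a
    | .a, .b => .a
    | .a, .c => .c
    | .b, .a => .a
    | .b, .b => .b
    | .b, .c => .b
    | .c, .a => .c
    | .c, .b => .b
    | .c, .c => .c⟩

/-! The alternative laws of `M3` are checked on the multiplication table, but they do not
survive linearization: expanding `((a+b)(a+b))c` and `(a+b)((a+b)c)` in `KM3`, the terms
`(aa)c = a(ac)` and `(bb)c = b(bc)` agree on both sides, while the cross terms give
`(ab)c + (ba)c = 2c` against `a(bc) + b(ac) = a + b`. So `a` has coefficient `0` on the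
left and `1` on the right. -/

namespace M3

open MonoidAlgebra

theorem mul_comm (x y : M3) : x * y = y * x := by
  cases x <;> cases y <;> rfl

theorem mul_self_mul (x y : M3) : x * x * y = x * (x * y) := by
  cases x <;> cases y <;> rfl

theorem mul_mul_self (x y : M3) : x * y * y = x * (y * y) := by
  cases x <;> cases y <;> rfl

variable {K : Type} [Semiring K]

theorem magmaAlgebra_sq_mul_c :
    ((single a 1 + single b 1 : MonoidAlgebra K M3) * (single a 1 + single b 1)) *
      single c 1 = single b 1 + single c 3 := by
  simp only [add_mul, mul_add, single_mul_single, one_mul]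
  change single c (1 : K) + single c 1 + (single c 1 + single b 1) = _
  rw [← add_assoc, ← single_add, ← single_add, add_comm]
  norm_num

theorem magmaAlgebra_mul_mul_c :
    (single a 1 + single b 1 : MonoidAlgebra K M3) * ((single a 1 + single b 1) * single c 1) =
      single a 1 + single b 2 + single c 1 := by
  simp only [add_mul, mul_add, single_mul_single, one_mul]
  change single c (1 : K) + single b 1 + (single a 1 + single b 1) = _
  rw [add_add_add_comm, ← single_add, one_add_one_eq_two]
  abel

theorem magmaAlgebra_not_leftAlternative [Nontrivial K] :
    ((single a 1 + single b 1 : MonoidAlgebra K M3) * (single a 1 + single b 1)) * single c 1 ≠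
      (single a 1 + single b 1) * ((single a 1 + single b 1) * single c 1) := by
  rw [magmaAlgebra_sq_mul_c, magmaAlgebra_mul_mul_c]
  intro h
  simpa [coeff_single] using congrArg (coeff · a) h

end M3

/-- The magma `M3` is commutative and alternative, but for any nontrivial commutative
ring `K` the magma algebra `K·M3` is not alternative:
`((a+b)(a+b))·c ≠ (a+b)·((a+b)c)`. -/
theorem magmaAlgebra_not_alternative (K : Type) [CommRing K] [Nontrivial K] :
    ((∀ x y : M3, x * y = y * x) ∧
     (∀ x y : M3, x * x * y = x * (x * y)) ∧
     (∀ x y : M3, x * y * y = x * (y * y))) ∧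
    (let A : MonoidAlgebra K M3 := MonoidAlgebra.single M3.a 1
     let B : MonoidAlgebra K M3 := MonoidAlgebra.single M3.b 1
     let C : MonoidAlgebra K M3 := MonoidAlgebra.single M3.c 1
     ((A + B) * (A + B)) * C ≠ (A + B) * ((A + B) * C)) :=
  ⟨⟨M3.mul_comm, M3.mul_self_mul, M3.mul_mul_self⟩, M3.magmaAlgebra_not_leftAlternative⟩
end
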